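/- Let A and B be positive definite Hermitian n×n matrices. Then tr(A⁻¹B) ≤ n · (det B / det A) · (tr(B⁻¹A))^(n-1). -/

import Mathlib

/-!
With `S = √A`, the matrix `S (A⁻¹ B) S⁻¹ = S⁻¹ B S⁻¹` is positive definite, and trace,
determinant and the trace of the inverse are similarity invariants. In terms of its eigenvalues
`λᵢ > 0` the inequality becomes `∑ λᵢ ≤ n (∏ λⱼ) (∑ λⱼ⁻¹)ⁿ⁻¹`, which holds termwise:
`λᵢ = (∏ λⱼ) ∏_{j ≠ i} λⱼ⁻¹`, and each of these `n - 1` factors is at most `∑ λⱼ⁻¹`.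
-/

open Matrix Finset
open scoped ComplexOrder MatrixOrder

theorem sum_le_card_mul_prod_mul_sum_inv_pow {ι : Type*} [Fintype ι] {x : ι → ℝ}
    (hx : ∀ i, 0 < x i) :
    ∑ i, x i ≤ Fintype.card ι * (∏ i, x i) * (∑ i, (x i)⁻¹) ^ (Fintype.card ι - 1) := by
  classical
  have hx_le (i : ι) : x i ≤ (∏ j, x j) * (∑ j, (x j)⁻¹) ^ (Fintype.card ι - 1) := by
    have hx_eq : x i = (∏ j, x j) * ∏ j ∈ univ.erase i, (x j)⁻¹ := by
      rw [← mul_prod_erase univ x (mem_univ i), mul_assoc, ← prod_mul_distrib,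
        prod_congr rfl fun j _ => mul_inv_cancel₀ (hx j).ne', prod_const_one, mul_one]
    have hprod_le : ∏ j ∈ univ.erase i, (x j)⁻¹ ≤ (∑ j, (x j)⁻¹) ^ (Fintype.card ι - 1) := by
      rw [← card_univ, ← card_erase_of_mem (mem_univ i), ← prod_const]
      exact prod_le_prod (fun j _ => (inv_pos.2 (hx j)).le) fun j _ =>
        single_le_sum (fun k _ => (inv_pos.2 (hx k)).le) (mem_univ j)
    rw [hx_eq]
    exact mul_le_mul_of_nonneg_left hprod_le (prod_pos fun j _ => hx j).le
  calc ∑ i, x i ≤ ∑ _i : ι, (∏ j, x j) * (∑ j, (x j)⁻¹) ^ (Fintype.card ι - 1) :=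
        sum_le_sum fun i _ => hx_le i
    _ = _ := by rw [sum_const, card_univ, nsmul_eq_mul, mul_assoc]

namespace Matrix

variable {ι 𝕜 : Type*} [Fintype ι] [DecidableEq ι] [RCLike 𝕜]

theorem IsHermitian.trace_cfc {A : Matrix ι ι 𝕜} (hA : A.IsHermitian) (f : ℝ → ℝ) :
    (cfc f A).trace = ∑ i, (f (hA.eigenvalues i) : 𝕜) := by
  rw [hA.cfc_eq, IsHermitian.cfc, Unitary.conjStarAlgAut_apply, trace_mul_cycle,
    Unitary.coe_star_mul_self, Matrix.one_mul, trace_diagonal]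
  rfl

theorem IsHermitian.trace_inv {A : Matrix ι ι 𝕜} (hA : A.IsHermitian) (h : IsUnit A) :
    A⁻¹.trace = ∑ i, ((hA.eigenvalues i)⁻¹ : 𝕜) := by
  rw [nonsing_inv_eq_ringInverse, ← cfc_ringInverse_id (R := ℝ) A h hA.isSelfAdjoint, hA.trace_cfc]
  push_cast
  rfl

theorem PosDef.trace_le_card_mul_det_mul_trace_inv_pow {C : Matrix ι ι 𝕜} (hC : C.PosDef) :
    C.trace ≤ Fintype.card ι * C.det * C⁻¹.trace ^ (Fintype.card ι - 1) := by
  rw [hC.isHermitian.trace_eq_sum_eigenvalues, hC.isHermitian.det_eq_prod_eigenvalues,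
    hC.isHermitian.trace_inv hC.isUnit]
  exact_mod_cast sum_le_card_mul_prod_mul_sum_inv_pow hC.eigenvalues_pos

theorem PosDef.exists_isUnit_posDef_conj_inv_mul {A B : Matrix ι ι 𝕜} (hA : A.PosDef)
    (hB : B.PosDef) : ∃ S : Matrix ι ι 𝕜, IsUnit S ∧ (S * (A⁻¹ * B) * S⁻¹).PosDef := by
  set S := CFC.sqrt A
  have hSS : S * S = A := CFC.sqrt_mul_sqrt_self A hA.posSemidef.nonneg
  have hS : IsUnit S := isUnit_of_mul_isUnit_left (hSS ▸ hA.isUnit)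
  have hSinv : S⁻¹ᴴ = S⁻¹ := (CFC.sqrt_nonneg A).posSemidef.inv.isHermitian
  refine ⟨S, hS, ?_⟩
  have hconj : S * (A⁻¹ * B) * S⁻¹ = S⁻¹ᴴ * B * S⁻¹ := by
    rw [hSinv, ← hSS, mul_inv_rev, ← Matrix.mul_assoc, ← Matrix.mul_assoc,
      mul_nonsing_inv S ((isUnit_iff_isUnit_det S).1 hS), Matrix.one_mul]
  rw [hconj]
  exact hB.conjTranspose_mul_mul_same (mulVec_injective_of_isUnit (isUnit_nonsing_inv_iff.2 hS))

theorem PosDef.trace_inv_mul_le {A B : Matrix ι ι 𝕜} (hA : A.PosDef) (hB : B.PosDef) :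
    (A⁻¹ * B).trace ≤
      Fintype.card ι * (B.det / A.det) * (B⁻¹ * A).trace ^ (Fintype.card ι - 1) := by
  obtain ⟨S, hS, hC⟩ := hA.exists_isUnit_posDef_conj_inv_mul hB
  have hC_le := hC.trace_le_card_mul_det_mul_trace_inv_pow
  have hSdet := (isUnit_iff_isUnit_det S).1 hS
  have hinv : (S * (A⁻¹ * B) * S⁻¹)⁻¹ = S * (B⁻¹ * A) * S⁻¹ := by
    rw [mul_inv_rev, mul_inv_rev, mul_inv_rev, nonsing_inv_nonsing_inv S hSdet,
      nonsing_inv_nonsing_inv A ((isUnit_iff_isUnit_det A).1 hA.isUnit)]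
    simp only [Matrix.mul_assoc]
  rwa [trace_conj hS, det_conj hS, hinv, trace_conj hS, det_mul, det_nonsing_inv,
    Ring.inverse_eq_inv', mul_comm A.det⁻¹, ← div_eq_mul_inv] at hC_le

end Matrix

/-- For positive definite symmetric matrices A, B:
tr(A⁻¹B) ≤ n · (det B / det A) · (tr(B⁻¹A))^(n-1). -/
theorem stmt_7 (n : ℕ) (A B : Matrix (Fin n) (Fin n) ℝ)
    (hA : A.PosDef) (hB : B.PosDef) :
    (A⁻¹ * B).trace ≤ n * (B.det / A.det) * ((B⁻¹ * A).trace) ^ (n - 1) := by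
  simpa using hA.trace_inv_mul_le hB
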